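/- Let $Y=(Y_t)_{t\in[0,T]}$ be a $d$-dimensional continuous stochastic process whose component processes $Y^1,\dots,Y^d$ are mutually independent. Then $Y$ has conditional full support with respect to its natural filtration $\mathbb{F}^Y$ if and only if each $Y^\nu$ has conditional full support with respect to its natural filtration $\mathbb{F}^{Y^\nu}$, for $\nu=1,\dots,d$. -/

import Mathlib

open MeasureTheory ProbabilityTheory Set
noncomputable section
variable {Ω : Type*}

/-- The small-ball event: the path of `X` on `[t₀,T]` stays `ε`-close to `X t₀ + f`. -/
def sbEvent {E : Type*} [NormedAddCommGroup E] (X : ℝ → Ω → E) (t₀ T ε : ℝ) (f : ℝ → E) : Set Ω :=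
  {ω | ∀ t ∈ Set.Icc t₀ T, ‖X t ω - X t₀ ω - f t‖ < ε}

/-- Conditional full support (conditional small ball property) of the process `X` on `[0,T]`
with respect to the filtration `F`. -/
def HasCFS {E : Type*} [NormedAddCommGroup E] [m0 : MeasurableSpace Ω] (μ : Measure Ω) (T : ℝ)
    (F : ℝ → MeasurableSpace Ω) (X : ℝ → Ω → E) : Prop :=
  ∀ t₀ ∈ Set.Ico (0:ℝ) T, ∀ f : ℝ → E, ContinuousOn f (Set.Icc t₀ T) → f t₀ = 0 →
    ∀ ε > 0, ∀ᵐ ω ∂μ,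
      0 < (μ[(sbEvent X t₀ T ε f).indicator (fun _ => (1:ℝ)) | F t₀]) ω

/-- The natural filtration of a process. -/
def natFilt {E : Type*} [MeasurableSpace E] [MeasurableSpace Ω] (X : ℝ → Ω → E) (t : ℝ) :
    MeasurableSpace Ω := ⨆ s ∈ Set.Iic t, MeasurableSpace.comap (X s) inferInstance

/-- The usual augmentation of a filtration: smallest right-continuous complete enlargement. -/
def usualAug [MeasurableSpace Ω] (μ : Measure Ω) (F : ℝ → MeasurableSpace Ω) (t : ℝ) :
    MeasurableSpace Ω :=
  ⨅ s ∈ Set.Ioi t, (F s ⊔ MeasurableSpace.generateFrom {N : Set Ω | μ N = 0})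

/-- The σ-algebra generated by a whole process. -/
def processSigma {E : Type*} [MeasurableSpace E] [MeasurableSpace Ω] (X : ℝ → Ω → E) :
    MeasurableSpace Ω := ⨆ t : ℝ, MeasurableSpace.comap (X t) inferInstance

/-!
Forward direction: a path `f` for the component `Y^i` gives the path `f • eᵢ` for `Y`, whose
small-ball event is contained in that of `Y^i`; conditional positivity then passes from
`F^Y_t` down to the smaller `F^{Y^i}_t` by the tower property.

Backward direction: `F^Y_t = ⨆ i, F^{Y^i}_t`, and because the `σ(Y^i)` are independent, the
conditional probability of an intersection `⋂ i, Aᵢ` with `Aᵢ ∈ σ(Y^i)` given `⨆ i, F^{Y^i}_t` is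
the product of the conditional probabilities of the `Aᵢ` given `F^{Y^i}_t` (check on the
π-system of intersections `⋂ i, Bᵢ` with `Bᵢ ∈ F^{Y^i}_t`, then extend by Dynkin's theorem).
Taking for `Aᵢ` the coordinate small-ball events of a small enough radius, their intersection
lies in the Euclidean small-ball event, and the product is a.s. positive.
-/

theorem measurableSet_setOf_forall_lt {α : Type*} [TopologicalSpace α]
    [TopologicalSpace.PseudoMetrizableSpace α] {m : MeasurableSpace Ω} {s : Set α}
    (hs : IsCompact s) {g : α → Ω → ℝ}
    (hgc : ∀ ω, ContinuousOn (g · ω) s) (hgm : ∀ t ∈ s, Measurable (g t)) (c : ℝ) :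
    MeasurableSet {ω | ∀ t ∈ s, g t ω < c} := by
  obtain ⟨D, hDs, hDc, hsD⟩ := hs.isSeparable.exists_countable_dense_subset
  have hrat : {ω | ∀ t ∈ s, g t ω < c} =
      ⋃ q : {q : ℚ // (q : ℝ) < c}, ⋂ t ∈ D, {ω | g t ω ≤ q} := by
    ext ω
    simp only [mem_ofPred_eq, mem_iUnion, mem_iInter]
    constructor
    · intro h
      obtain ⟨a, hca, ha⟩ :=
        hs.exists_forall_le' (hgc ω).neg (a := -c) fun t ht => neg_lt_neg (h t ht)
      obtain ⟨q, haq, hqc⟩ := exists_rat_btwn (neg_lt.1 hca)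
      refine ⟨⟨q, hqc⟩, fun t ht => ?_⟩
      show g t ω ≤ q
      linarith [show a ≤ -g t ω from ha t (hDs ht)]
    · rintro ⟨q, hq⟩ t ht
      have hle : g t ω ≤ q :=
        ContinuousWithinAt.closure_le (f := (g · ω)) (g := fun _ => (q : ℝ)) (hsD ht)
          (((hgc ω) t ht).mono hDs) continuousWithinAt_const hq
      exact hle.trans_lt q.2
  rw [hrat]
  exact .iUnion fun q => .biInter hDc fun t ht => measurableSet_le (hgm t (hDs ht)) measurable_const

theorem measurableSet_sbEvent {E : Type*} [NormedAddCommGroup E] [MeasurableSpace E] [BorelSpace E]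
    [SecondCountableTopology E] {m : MeasurableSpace Ω} {X : ℝ → Ω → E}
    (hXc : ∀ ω, Continuous (X · ω)) (hXm : ∀ t, Measurable (X t)) {f : ℝ → E} {t₀ T : ℝ}
    (hf : ContinuousOn f (Icc t₀ T)) (ε : ℝ) : MeasurableSet (sbEvent X t₀ T ε f) :=
  measurableSet_setOf_forall_lt isCompact_Icc
    (fun ω => (((hXc ω).sub continuous_const).continuousOn.sub hf).norm)
    (fun t _ => (((hXm t).sub (hXm t₀)).sub_const (f t)).norm) ε

section CondExpPos

variable {m m0 : MeasurableSpace Ω} {μ : Measure Ω} [IsFiniteMeasure μ]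

theorem ae_pos_condExp (hm : m ≤ m0) {g : Ω → ℝ} (hg : Integrable g μ)
    (hpos : ∀ᵐ ω ∂μ, 0 < g ω) : ∀ᵐ ω ∂μ, 0 < μ[g|m] ω := by
  set N := {ω | μ[g|m] ω ≤ 0}
  have hN : MeasurableSet[m] N :=
    measurableSet_le stronglyMeasurable_condExp.measurable measurable_const
  have hposN : ∀ᵐ ω ∂μ.restrict N, 0 < g ω := ae_restrict_of_ae hpos
  have hgN : ∫ ω in N, g ω ∂μ = 0 := by
    refine le_antisymm ?_ (setIntegral_nonneg_of_ae_restrict (hposN.mono fun _ h => h.le))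
    rw [← setIntegral_condExp hm hg hN]
    exact setIntegral_nonpos (hm _ hN) fun ω hω => hω
  have hg0 : g =ᵐ[μ.restrict N] 0 :=
    (setIntegral_eq_zero_iff_of_nonneg_ae (hposN.mono fun _ h => h.le) hg.integrableOn).1 hgN
  have hμN : μ N = 0 := by
    rw [← Measure.restrict_eq_zero, ← ae_eq_bot, ← Filter.eventually_false_iff_eq_bot]
    filter_upwards [hposN, hg0] with ω h h0
    simp [h0] at h
  filter_upwards [measure_eq_zero_iff_ae_notMem.1 hμN] with ω hω
  exact not_le.1 hω

theorem ae_pos_condExp_of_le {m₁ m₂ : MeasurableSpace Ω} (h₁₂ : m₁ ≤ m₂) (h₂ : m₂ ≤ m0)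
    {g : Ω → ℝ} (hpos : ∀ᵐ ω ∂μ, 0 < μ[g|m₂] ω) : ∀ᵐ ω ∂μ, 0 < μ[g|m₁] ω := by
  filter_upwards [ae_pos_condExp (h₁₂.trans h₂) integrable_condExp hpos,
    condExp_condExp_of_le (f := g) h₁₂ h₂] with ω hω heq
  rwa [← heq]

theorem ae_pos_condExp_indicator_of_subset {A B : Set Ω} (hA : MeasurableSet A)
    (hB : MeasurableSet B) (hAB : A ⊆ B)
    (hpos : ∀ᵐ ω ∂μ, 0 < μ[A.indicator (fun _ => (1:ℝ)) | m] ω) :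
    ∀ᵐ ω ∂μ, 0 < μ[B.indicator (fun _ => (1:ℝ)) | m] ω := by
  filter_upwards [hpos, condExp_mono ((integrable_const (1:ℝ)).indicator hA)
    ((integrable_const (1:ℝ)).indicator hB)
    (ae_of_all _ (indicator_le_indicator_of_subset hAB fun _ => zero_le_one))] with ω h hle
  exact h.trans_le hle

end CondExpPos

theorem setIntegral_eq_of_isPiSystem {E : Type*} [NormedAddCommGroup E] [NormedSpace ℝ E]
    {m m0 : MeasurableSpace Ω} {μ : Measure Ω} (hm : m ≤ m0) {C : Set (Set Ω)}
    (hCm : m = MeasurableSpace.generateFrom C) (hC : IsPiSystem C) {f g : Ω → E}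
    (hf : Integrable f μ) (hg : Integrable g μ)
    (hfg : ∀ s ∈ C, ∫ ω in s, f ω ∂μ = ∫ ω in s, g ω ∂μ)
    (huniv : ∫ ω, f ω ∂μ = ∫ ω, g ω ∂μ) {s : Set Ω} (hs : MeasurableSet[m] s) :
    ∫ ω in s, f ω ∂μ = ∫ ω in s, g ω ∂μ := by
  induction s, hs using MeasurableSpace.induction_on_inter hCm hC with
  | empty => simp
  | basic t ht => exact hfg t ht
  | compl t ht iht =>
    rw [setIntegral_compl (hm t ht) hf, setIntegral_compl (hm t ht) hg, iht, huniv]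
  | iUnion t htd htm iht =>
    rw [integral_iUnion (fun n => hm _ (htm n)) htd hf.integrableOn,
      integral_iUnion (fun n => hm _ (htm n)) htd hg.integrableOn]
    exact tsum_congr iht

namespace ProbabilityTheory

variable {ι : Type*} {m0 : MeasurableSpace Ω} {μ : Measure Ω} {S G : ι → MeasurableSpace Ω}
  {F : ι → Ω → ℝ}

theorem iIndep.iIndepFun_of_measurable (h : iIndep S μ) (hF : ∀ i, Measurable[S i] (F i)) :
    iIndepFun F μ :=
  (iIndepFun_iff_iIndep _ _ _).2 (iIndep_of_iIndep_of_le h fun i => (hF i).comap_le)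

variable [Fintype ι]

theorem iIndep.integrable_prod (hS : ∀ i, S i ≤ m0) (h : iIndep S μ)
    (hFm : ∀ i, StronglyMeasurable[S i] (F i)) (hFi : ∀ i, Integrable (F i) μ) :
    Integrable (fun ω => ∏ i, F i ω) μ := by
  have hFm0 : ∀ i, Measurable (F i) := fun i => (hFm i).measurable.mono (hS i) le_rfl
  refine ⟨(Finset.measurable_prod _ fun i _ => hFm0 i).aestronglyMeasurable, ?_⟩
  have hind : iIndepFun (fun i ω => ‖F i ω‖ₑ) μ :=
    (h.iIndepFun_of_measurable fun i => (hFm i).measurable).comp (fun _ => enorm)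
      fun _ => measurable_enorm
  calc ∫⁻ ω, ‖∏ i, F i ω‖ₑ ∂μ = ∫⁻ ω, ∏ i, ‖F i ω‖ₑ ∂μ := by
        simp [enorm_eq_nnnorm, nnnorm_prod]
    _ = ∏ i, ∫⁻ ω, ‖F i ω‖ₑ ∂μ :=
        lintegral_prod_eq_prod_lintegral_of_indepFun _ _ hind fun i => (hFm0 i).enorm
    _ < ⊤ := ENNReal.prod_lt_top fun i _ => (hFi i).2

theorem iIndep.setIntegral_iInter_prod (hS : ∀ i, S i ≤ m0) (h : iIndep S μ)
    (hFm : ∀ i, StronglyMeasurable[S i] (F i)) {B : ι → Set Ω}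
    (hB : ∀ i, MeasurableSet[S i] (B i)) :
    ∫ ω in ⋂ i, B i, ∏ i, F i ω ∂μ = ∏ i, ∫ ω in B i, F i ω ∂μ := by
  have hBm0 : ∀ i, MeasurableSet (B i) := fun i => hS i _ (hB i)
  have hind : iIndepFun (fun i => (B i).indicator (F i)) μ :=
    h.iIndepFun_of_measurable fun i => ((hFm i).indicator (hB i)).measurable
  rw [← integral_indicator (MeasurableSet.iInter hBm0)]
  convert hind.integral_fun_prod_eq_prod_integral fun i =>
    (((hFm i).indicator (hB i)).mono (hS i)).aestronglyMeasurable using 1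
  · congr 1 with ω
    simpa [Finset.prod_fn] using (prod_indicator_apply Finset.univ B F ω).symm
  · exact Finset.prod_congr rfl fun i _ => (integral_indicator (hBm0 i)).symm

theorem iIndep.condExp_prod_ae_eq_prod_condExp (hS : ∀ i, S i ≤ m0) (h : iIndep S μ)
    (hGS : ∀ i, G i ≤ S i) (hFm : ∀ i, StronglyMeasurable[S i] (F i))
    (hFi : ∀ i, Integrable (F i) μ) :
    μ[fun ω => ∏ i, F i ω | ⨆ i, G i] =ᵐ[μ] fun ω => ∏ i, μ[F i | G i] ω := by
  have := h.isProbabilityMeasure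
  have hG0 : ∀ i, G i ≤ m0 := fun i => (hGS i).trans (hS i)
  have hHm : ∀ i, StronglyMeasurable[S i] (μ[F i | G i]) := fun i =>
    stronglyMeasurable_condExp.mono (hGS i)
  have hH : Integrable (fun ω => ∏ i, μ[F i | G i] ω) μ :=
    h.integrable_prod hS hHm fun i => integrable_condExp
  have hcyl : ∀ B : ι → Set Ω, (∀ i, MeasurableSet[G i] (B i)) →
      ∫ ω in ⋂ i, B i, ∏ i, μ[F i | G i] ω ∂μ = ∫ ω in ⋂ i, B i, ∏ i, F i ω ∂μ := by
    intro B hB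
    rw [h.setIntegral_iInter_prod hS hHm fun i => hGS i _ (hB i),
      h.setIntegral_iInter_prod hS hFm fun i => hGS i _ (hB i)]
    exact Finset.prod_congr rfl fun i _ => setIntegral_condExp (hG0 i) (hFi i) (hB i)
  have hpi : ∀ s ∈ piiUnionInter (fun i => {s | MeasurableSet[G i] s}) univ,
      ∫ ω in s, ∏ i, μ[F i | G i] ω ∂μ = ∫ ω in s, ∏ i, F i ω ∂μ := by
    classical
    rintro _ ⟨t, -, B, hB, rfl⟩
    convert hcyl (fun i => if i ∈ t then B i else univ)
      (fun i => by split_ifs with hi; exacts [hB i hi, .univ]) using 3 <;>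
    · ext ω; simp
  refine (ae_eq_condExp_of_forall_setIntegral_eq (iSup_le hG0) (h.integrable_prod hS hFm hFi)
    (fun _ _ _ => hH.integrableOn) (fun s hs _ => ?_) ?_).symm
  · refine setIntegral_eq_of_isPiSystem (iSup_le hG0)
      ((generateFrom_piiUnionInter_measurableSet G univ).trans iSup_univ).symm
      (isPiSystem_piiUnionInter _ (fun i => @MeasurableSpace.isPiSystem_measurableSet Ω (G i)) _)
      hH (h.integrable_prod hS hFm hFi) hpi ?_ hs
    simpa using hcyl (fun _ => univ) fun _ => .univ
  · exact (Finset.measurable_prod _ fun i _ =>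
      (stronglyMeasurable_condExp.mono (le_iSup G i)).measurable).aestronglyMeasurable

end ProbabilityTheory

section NaturalFiltration

variable {m0 : MeasurableSpace Ω} {E : Type*} [MeasurableSpace E]

theorem natFilt_le_processSigma (X : ℝ → Ω → E) (t : ℝ) : natFilt X t ≤ processSigma X :=
  iSup₂_le fun s _ => le_iSup (fun s => MeasurableSpace.comap (X s) inferInstance) s

theorem processSigma_le {X : ℝ → Ω → E} (hX : ∀ t, Measurable (X t)) : processSigma X ≤ m0 :=
  iSup_le fun t => (hX t).comap_le

theorem measurable_processSigma (X : ℝ → Ω → E) (t : ℝ) : Measurable[processSigma X] (X t) :=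
  Measurable.of_comap_le (le_iSup (fun s => MeasurableSpace.comap (X s) inferInstance) t)

end NaturalFiltration

section EuclideanSpace

variable {ι : Type*}

theorem EuclideanSpace.exists_pos_forall_norm_lt [Fintype ι] {ε : ℝ} (hε : 0 < ε) :
    ∃ δ > 0, ∀ x : EuclideanSpace ℝ ι, (∀ i, ‖x i‖ < δ) → ‖x‖ < ε := by
  obtain ⟨δ, hδ, h⟩ := Metric.continuous_iff.1 (PiLp.continuous_toLp 2 fun _ : ι => ℝ) 0 ε hε
  refine ⟨δ, hδ, fun x hx => ?_⟩
  simpa using h (WithLp.ofLp x) (by simpa using (pi_norm_lt_iff hδ).2 hx)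

theorem MeasurableSpace.comap_euclideanSpace_eq_iSup (Z : Ω → EuclideanSpace ℝ ι) :
    MeasurableSpace.comap Z inferInstance =
      ⨆ i, MeasurableSpace.comap (fun ω => Z ω i) inferInstance := by
  rw [show (inferInstance : MeasurableSpace (EuclideanSpace ℝ ι)) =
      MeasurableSpace.comap WithLp.ofLp MeasurableSpace.pi from rfl, MeasurableSpace.pi,
    MeasurableSpace.comap_iSup, MeasurableSpace.comap_iSup]
  simp only [MeasurableSpace.comap_comp]
  rfl

theorem natFilt_euclideanSpace_eq_iSup {m0 : MeasurableSpace Ω}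
    (Y : ℝ → Ω → EuclideanSpace ℝ ι) (t : ℝ) :
    natFilt Y t = ⨆ i, natFilt (fun s ω => Y s ω i) t := by
  simp only [natFilt, MeasurableSpace.comap_euclideanSpace_eq_iSup]
  rw [iSup_comm]
  congr 1 with s
  rw [iSup_comm]

end EuclideanSpace

section Components

variable {m0 : MeasurableSpace Ω} {μ : Measure Ω} {T : ℝ} {ι : Type*} [Fintype ι]
  {Y : ℝ → Ω → EuclideanSpace ℝ ι}

theorem HasCFS.component [IsFiniteMeasure μ] (hYc : ∀ ω, Continuous (Y · ω))
    (hYm : ∀ t, Measurable (Y t)) (h : HasCFS μ T (natFilt Y) Y) (i : ι) :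
    HasCFS μ T (natFilt (fun t ω => Y t ω i)) (fun t ω => Y t ω i) := by
  classical
  intro t₀ ht₀ f hf hf0 ε hε
  set F : ℝ → EuclideanSpace ℝ ι := fun t => f t • EuclideanSpace.single i (1 : ℝ)
  have hF : ContinuousOn F (Icc t₀ T) := hf.smul continuousOn_const
  have hsub : sbEvent Y t₀ T ε F ⊆ sbEvent (fun t ω => Y t ω i) t₀ T ε f := fun ω hω t ht =>
    calc ‖Y t ω i - Y t₀ ω i - f t‖ = ‖(Y t ω - Y t₀ ω - F t) i‖ := by simp [F]
      _ ≤ ‖Y t ω - Y t₀ ω - F t‖ := PiLp.norm_apply_le _ i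
      _ < ε := hω t ht
  have hYi : ∀ t, Measurable (Y t · i) := fun t => by fun_prop
  refine ae_pos_condExp_of_le ?_ ((natFilt_le_processSigma Y t₀).trans (processSigma_le hYm)) ?_
  · rw [natFilt_euclideanSpace_eq_iSup]
    exact le_iSup (fun j => natFilt (fun s ω => Y s ω j) t₀) i
  · exact ae_pos_condExp_indicator_of_subset (measurableSet_sbEvent hYc hYm hF ε)
      (measurableSet_sbEvent (fun ω => by fun_prop) hYi hf ε) hsub
      (h t₀ ht₀ F hF (by simp [F, hf0]) ε hε)

theorem HasCFS.of_components (hYc : ∀ ω, Continuous (Y · ω)) (hYm : ∀ t, Measurable (Y t))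
    (hind : iIndep (fun i => processSigma (fun t ω => Y t ω i)) μ)
    (h : ∀ i, HasCFS μ T (natFilt (fun t ω => Y t ω i)) (fun t ω => Y t ω i)) :
    HasCFS μ T (natFilt Y) Y := by
  have := hind.isProbabilityMeasure
  intro t₀ ht₀ f hf hf0 ε hε
  obtain ⟨δ, hδ, hδε⟩ := EuclideanSpace.exists_pos_forall_norm_lt (ι := ι) hε
  set A : ι → Set Ω := fun i => sbEvent (fun t ω => Y t ω i) t₀ T δ (f · i)
  have hYi : ∀ i t, Measurable (Y t · i) := fun i t => by fun_prop
  have hfi : ∀ i, ContinuousOn (f · i) (Icc t₀ T) := fun i => by fun_prop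
  have hA : ∀ i, MeasurableSet[processSigma (fun t ω => Y t ω i)] (A i) := fun i =>
    measurableSet_sbEvent (fun ω => by fun_prop) (measurable_processSigma _) (hfi i) δ
  have hA0 : ∀ i, MeasurableSet (A i) := fun i => processSigma_le (hYi i) _ (hA i)
  have hsub : ⋂ i, A i ⊆ sbEvent Y t₀ T ε f := fun ω hω t ht =>
    hδε _ fun i => by simpa using mem_iInter.1 hω i t ht
  have hprod := hind.condExp_prod_ae_eq_prod_condExp (fun i => processSigma_le (hYi i))
    (fun i => natFilt_le_processSigma _ t₀)
    (fun i => stronglyMeasurable_const.indicator (hA i))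
    (fun i => (integrable_const (1:ℝ)).indicator (hA0 i))
  have hpos : ∀ᵐ ω ∂μ, ∀ i, 0 < μ[(A i).indicator (fun _ => (1:ℝ)) |
      natFilt (fun t ω => Y t ω i) t₀] ω :=
    ae_all_iff.2 fun i => h i t₀ ht₀ _ (hfi i) (by simp [hf0]) δ hδ
  rw [natFilt_euclideanSpace_eq_iSup]
  refine ae_pos_condExp_indicator_of_subset (.iInter hA0)
    (measurableSet_sbEvent hYc hYm hf ε) hsub ?_
  have hindicator : (fun ω => ∏ i, (A i).indicator (fun _ => (1:ℝ)) ω) =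
      (⋂ i, A i).indicator (fun _ => 1) := by
    ext ω
    rw [prod_indicator_apply]
    simp [Pi.pow_def]
  rw [hindicator] at hprod
  filter_upwards [hprod, hpos] with ω hω hpos
  rw [hω]
  exact Finset.prod_pos fun i _ => hpos i

end Components

theorem cfs_iff_components_independent_general
    {m0 : MeasurableSpace Ω} (μ : Measure Ω) [IsProbabilityMeasure μ]
    (T : ℝ) (d : ℕ)
    (Y : ℝ → Ω → EuclideanSpace ℝ (Fin d))
    (hYcont : ∀ ω, Continuous fun t => Y t ω)
    (hYmeas : ∀ t : ℝ, Measurable (Y t))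
    (hindep : ProbabilityTheory.iIndep (fun i : Fin d => processSigma (fun t ω => Y t ω i)) μ) :
    HasCFS μ T (natFilt Y) Y ↔
      ∀ i : Fin d, HasCFS μ T (natFilt (fun t ω => Y t ω i)) (fun t ω => Y t ω i) :=
  ⟨fun h i => h.component hYcont hYmeas i, HasCFS.of_components hYcont hYmeas hindep⟩

/-- a continuous process with mutually independent components has CFS with
respect to its natural filtration iff each component has CFS with respect to its own
natural filtration. -/
theorem cfs_iff_components_independent
    {m0 : MeasurableSpace Ω} (μ : Measure Ω) [IsProbabilityMeasure μ]
    (T : ℝ) (hT : 0 < T) (d : ℕ)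
    (Y : ℝ → Ω → EuclideanSpace ℝ (Fin d))
    (hYcont : ∀ ω, Continuous fun t => Y t ω)
    (hYmeas : ∀ t : ℝ, Measurable (Y t))
    (hindep : ProbabilityTheory.iIndep (fun i : Fin d => processSigma (fun t ω => Y t ω i)) μ) :
    HasCFS μ T (natFilt Y) Y ↔
      ∀ i : Fin d, HasCFS μ T (natFilt (fun t ω => Y t ω i)) (fun t ω => Y t ω i) :=
  cfs_iff_components_independent_general (m0 := m0) μ T d Y hYcont hYmeas hindep
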